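/- arXiv:2604.12181 — 2 statements merged into one kernel-verified Lean document; each statement's English description precedes it below -/
import Mathlib

section
/- Let p* ∈ ℝ^X with p* ≥ 0 and p*_w = 0 for some w ∈ X, and suppose ξ_x ≤ ξ̄ < b_i for all x ∈ X almost surely. Suppose either (i) ξ = c·𝟙 almost surely for some real random variable c, or (ii) ξ = c·𝟙 + ζ almost surely with |ζ_x| ≤ z for all x and |p*_x − p*_y| > 2z for all distinct x, y ∈ X. Let a* ∈ L_i(p*) and let a ∈ [0,1]^X with Σ_x a_x = 1. If a stochastically dominates a* with respect to ≽_i, then p*·a ≥ p*·a*; if the dominance is strict, then p*·a > p*·a*. -/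
open MeasureTheory Pointwise

/-- The standard basis vector `e_x` in `ℝ^X`. -/
def basisVec {X : Type*} [DecidableEq X] (x : X) : X → ℝ := fun y => if y = x then 1 else 0

/-- The demand correspondence `D_i(q)`: cheapest most-preferred affordable objects
(as basis vectors), or `{0}` when nothing is affordable. -/
def Demand {X : Type*} [DecidableEq X] (pref : X → X → Prop) (b : ℝ) (q : X → ℝ) :
    Set (X → ℝ) :=
  {d | (∃ x, q x ≤ b ∧ d = basisVec x ∧
          (∀ y, q y ≤ b → pref x y) ∧
          (∀ y, q y ≤ b → (∀ z, q z ≤ b → pref y z) → q x ≤ q y)) ∨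
       ((¬ ∃ x, q x ≤ b) ∧ d = 0)}

/-- Lottery demand: the Aumann integral of the demand correspondence over the
price shock with law `G`. -/
def Lottery {X : Type*} [Fintype X] [DecidableEq X] (pref : X → X → Prop) (b : ℝ)
    (G : Measure (X → ℝ)) (p : X → ℝ) : Set (X → ℝ) :=
  {a | ∃ g : (X → ℝ) → (X → ℝ), Measurable g ∧
        (∀ᵐ ξ ∂G, g ξ ∈ Demand pref b (p + ξ)) ∧ a = ∫ ξ, g ξ ∂G}

/-- Assumption 1: each coordinate of the price shock is atomless, mean-zero,
and almost surely bounded in `[ξlo, ξhi]`. -/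
def Assumption1 {X : Type*} [Fintype X] (G : Measure (X → ℝ)) (ξlo ξhi : ℝ) : Prop :=
  ∀ x : X, (∀ r : ℝ, G {ξ | ξ x = r} = 0) ∧ (∫ ξ, ξ x ∂G) = 0 ∧
    (∀ᵐ ξ ∂G, ξlo ≤ ξ x ∧ ξ x ≤ ξhi)

open Classical in
/-- `a'` stochastically dominates `a` with respect to the preference `pref`. -/
noncomputable def StochDom {X : Type*} [Fintype X] (pref : X → X → Prop)
    (a' a : X → ℝ) : Prop :=
  ∀ x : X, ∑ y ∈ Finset.univ.filter (fun y => pref y x), a y ≤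
    ∑ y ∈ Finset.univ.filter (fun y => pref y x), a' y

open Classical in
/-- Strict stochastic dominance. -/
noncomputable def StrictStochDom {X : Type*} [Fintype X] (pref : X → X → Prop)
    (a' a : X → ℝ) : Prop :=
  StochDom pref a' a ∧
    ∃ x : X, ∑ y ∈ Finset.univ.filter (fun y => pref y x), a y <
      ∑ y ∈ Finset.univ.filter (fun y => pref y x), a' y

/-!
Write `m x` for the cheapest price among the objects weakly preferred to `x`. Since `w` is free
and shocks stay below the budget, something is always affordable, so `a*` is a probability vector
and every object in its support is demanded at some realised price. In either case (i) or (ii)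
this forces every weakly better object to cost at least as much, and every strictly better one
to cost more. Hence `m ≤ p*` with equality on the support of `a*`, `m` is monotone in `≽`, and
`p*·a - p*·a* ≥ m·(a - a*)`. By Abel summation over the superlevel sets of `m`, each of which is
an upper contour set, `m·(a - a*)` is a nonnegative combination of the dominance gaps
`∑_{y ≽ x} (a - a*)_y`. Under strict dominance at `x₀`, the superlevel set of `m x₀` exceeds the
upper contour set of `x₀` only by objects outside the support of `a*`, and `m x₀ > 0` because
some demanded object lies strictly below `x₀`; so the combination is positive.
-/

open Finset

theorem sum_mul_nonneg_of_superlevel_sum_nonneg {X : Type*} [Fintype X] {m d : X → ℝ}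
    (hm : ∀ x, 0 ≤ m x)
    (hS : ∀ x, 0 < m x → 0 ≤ ∑ y ∈ univ.filter (fun y => m x ≤ m y), d y) :
    0 ≤ ∑ x, m x * d x ∧
      ((∃ x, 0 < m x ∧ 0 < ∑ y ∈ univ.filter (fun y => m x ≤ m y), d y) →
        0 < ∑ x, m x * d x) := by
  induction hn : #(univ.filter fun x => 0 < m x) using Nat.strong_induction_on generalizing m
    with | _ n ih =>
  rcases (univ.filter fun x => 0 < m x).eq_empty_or_nonempty with hempty | hne
  · have hm0 : ∀ x, m x = 0 := fun x =>
      le_antisymm (not_lt.1 (filter_eq_empty_iff.1 hempty (mem_univ x))) (hm x)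
    simp [hm0]
  obtain ⟨x₀, hx₀, hmin⟩ := exists_min_image _ m hne
  set v := m x₀
  have hv : 0 < v := (mem_filter.1 hx₀).2
  have hle : ∀ x, 0 < m x → v ≤ m x := fun x hx => hmin x (mem_filter.2 ⟨mem_univ x, hx⟩)
  -- peel off the bottom layer: `m = v • 𝟙{v ≤ m} + (m - v)⁺`
  set m' : X → ℝ := fun x => max (m x - v) 0
  have hpos' : ∀ x, 0 < m' x ↔ v < m x := fun x => by simp [m']
  have hlevel : ∀ x, 0 < m' x →
      univ.filter (fun y => m' x ≤ m' y) = univ.filter (fun y => m x ≤ m y) := by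
    intro x hx
    have hvx := (hpos' x).1 hx
    ext y
    simp only [mem_filter, mem_univ, true_and, m', max_eq_left (sub_pos.2 hvx).le, le_max_iff]
    constructor
    · rintro (h | h) <;> linarith
    · intro h; left; linarith
  have hcard : #(univ.filter fun x => 0 < m' x) < n := by
    refine hn ▸ card_lt_card ((ssubset_iff_of_subset ?_).2
      ⟨x₀, hx₀, fun h => lt_irrefl v ((hpos' x₀).1 (mem_filter.1 h).2)⟩)
    intro x hx
    simp only [mem_filter, mem_univ, true_and, hpos'] at hx ⊢
    exact hv.trans hx
  have hsplit : ∑ x, m x * d x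
      = v * ∑ y ∈ univ.filter (fun y => v ≤ m y), d y + ∑ x, m' x * d x := by
    rw [mul_sum, sum_filter, ← sum_add_distrib]
    refine sum_congr rfl fun x _ => ?_
    by_cases hvx : v ≤ m x
    · rw [if_pos hvx]
      simp only [m', max_eq_left (sub_nonneg.2 hvx)]
      ring
    · have : m x = 0 := le_antisymm (not_lt.1 fun h => hvx (hle x h)) (hm x)
      rw [if_neg hvx]
      simp only [m', this, zero_sub, max_eq_right (neg_nonpos.2 hv.le)]
      ring
  obtain ⟨ih_nonneg, ih_pos⟩ := @ih _ hcard m' (fun x => le_max_right _ _)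
    (fun x hx => hlevel x hx ▸ hS x (hv.trans ((hpos' x).1 hx))) rfl
  have hbottom := mul_nonneg hv.le (hS x₀ hv)
  refine ⟨by linarith, fun ⟨x, hx, hSx⟩ => ?_⟩
  rcases (hle x hx).eq_or_lt with hvx | hvx
  · have := mul_pos hv (hvx ▸ hSx)
    linarith
  · have := ih_pos ⟨x, (hpos' x).2 hvx, hlevel x ((hpos' x).2 hvx) ▸ hSx⟩
    linarith

theorem Finset.exists_forall_rel_of_total {α : Type*} {r : α → α → Prop}
    (htotal : ∀ x y, r x y ∨ r y x) (htrans : Transitive r) {s : Finset α} (hs : s.Nonempty) :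
    ∃ x ∈ s, ∀ y ∈ s, r y x := by
  classical
  induction s using Finset.induction_on with
  | empty => simp at hs
  | insert a s _ ih =>
    rcases s.eq_empty_or_nonempty with rfl | hne
    · exact ⟨a, mem_insert_self _ _, by simpa using (htotal a a).elim id id⟩
    obtain ⟨b, hb, hleast⟩ := ih hne
    rcases htotal b a with hba | hab
    · exact ⟨a, mem_insert_self _ _, forall_mem_insert _ _ _ |>.2
        ⟨(htotal a a).elim id id, fun y hy => htrans (hleast y hy) hba⟩⟩
    · exact ⟨b, mem_insert_of_mem hb, forall_mem_insert _ _ _ |>.2 ⟨hab, hleast⟩⟩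

def SupportPriceMonotone {X : Type*} (pref : X → X → Prop) (p astar : X → ℝ) : Prop :=
  ∀ x y, pref x y → 0 < astar y → p y ≤ p x ∧ (¬ pref y x → p y < p x)

section Dominance

open Classical

variable {X : Type*} [Fintype X] {pref : X → X → Prop} {p a astar : X → ℝ} {x y : X}

/-- Inserting `x` only makes the set visibly nonempty: `pref` is reflexive wherever this is
used. -/
noncomputable def minPriceAbove (pref : X → X → Prop) (p : X → ℝ) (x : X) : ℝ :=
  (insert x (univ.filter fun y => pref y x)).inf' (insert_nonempty _ _) p

theorem minPriceAbove_le_self : minPriceAbove pref p x ≤ p x :=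
  inf'_le _ (mem_insert_self _ _)

theorem minPriceAbove_le (h : pref y x) : minPriceAbove pref p x ≤ p y :=
  inf'_le (s := insert x _) _ (mem_insert_of_mem (mem_filter.2 ⟨mem_univ y, h⟩))

theorem minPriceAbove_nonneg (hp : ∀ x, 0 ≤ p x) : 0 ≤ minPriceAbove pref p x :=
  le_inf' _ _ fun y _ => hp y

theorem minPriceAbove_mono (htrans : Transitive pref) (hxy : pref x y) :
    minPriceAbove pref p y ≤ minPriceAbove pref p x := by
  refine le_inf' _ _ fun u hu => ?_
  rcases mem_insert.1 hu with rfl | hu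
  · exact minPriceAbove_le hxy
  · exact minPriceAbove_le (htrans (mem_filter.1 hu).2 hxy)

theorem minPriceAbove_eq_of_pos (hmono : SupportPriceMonotone pref p astar) (hx : 0 < astar x) :
    minPriceAbove pref p x = p x := by
  refine le_antisymm minPriceAbove_le_self (le_inf' _ _ fun u hu => ?_)
  rcases mem_insert.1 hu with rfl | hu
  · exact le_rfl
  · exact (hmono u x (mem_filter.1 hu).2 hx).1

theorem lt_minPriceAbove (htotal : ∀ x y, pref x y ∨ pref y x) (htrans : Transitive pref)
    (hmono : SupportPriceMonotone pref p astar) (hy : 0 < astar y) (hyx : ¬ pref y x) :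
    p y < minPriceAbove pref p x := by
  refine (lt_inf'_iff _).2 fun u hu => ?_
  rcases mem_insert.1 hu with rfl | hu
  · exact (hmono u y ((htotal y u).resolve_left hyx) hy).2 hyx
  · have hux := (mem_filter.1 hu).2
    exact (hmono u y (htrans hux ((htotal y x).resolve_left hyx)) hy).2
      fun hyu => hyx (htrans hyu hux)

theorem exists_superlevel_minPriceAbove_eq (htotal : ∀ x y, pref x y ∨ pref y x)
    (htrans : Transitive pref) (x : X) :
    ∃ x', univ.filter (fun y => minPriceAbove pref p x ≤ minPriceAbove pref p y) =
      univ.filter (fun y => pref y x') := by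
  obtain ⟨x', hx', hleast⟩ := exists_forall_rel_of_total htotal htrans
    ⟨x, mem_filter.2 ⟨mem_univ x, le_rfl⟩⟩ (s := univ.filter fun y =>
      minPriceAbove pref p x ≤ minPriceAbove pref p y)
  refine ⟨x', ext fun y => ⟨fun hy => mem_filter.2 ⟨mem_univ y, hleast y hy⟩, fun hy => ?_⟩⟩
  exact mem_filter.2 ⟨mem_univ y,
    (mem_filter.1 hx').2.trans (minPriceAbove_mono htrans (mem_filter.1 hy).2)⟩

theorem sum_minPriceAbove_mul_sub_le (hastar : ∀ x, 0 ≤ astar x) (ha : ∀ x, 0 ≤ a x)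
    (hmono : SupportPriceMonotone pref p astar) :
    ∑ x, minPriceAbove pref p x * (a x - astar x) ≤ ∑ x, p x * a x - ∑ x, p x * astar x := by
  have hsupp : ∑ x, p x * astar x = ∑ x, minPriceAbove pref p x * astar x := by
    refine sum_congr rfl fun x _ => ?_
    rcases (hastar x).eq_or_lt with h | h
    · simp [← h]
    · rw [minPriceAbove_eq_of_pos hmono h]
  rw [hsupp, ← sum_sub_distrib, ← sub_nonneg, ← sum_sub_distrib]
  exact sum_nonneg fun x _ => by
    nlinarith [minPriceAbove_le_self (pref := pref) (p := p) (x := x), ha x]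

theorem superlevel_sum_nonneg_of_stochDom (htotal : ∀ x y, pref x y ∨ pref y x)
    (htrans : Transitive pref) (hdom : StochDom pref a astar) (x : X) :
    0 ≤ ∑ y ∈ univ.filter (fun y => minPriceAbove pref p x ≤ minPriceAbove pref p y),
      (a y - astar y) := by
  obtain ⟨x', hx'⟩ := exists_superlevel_minPriceAbove_eq (p := p) htotal htrans x
  rw [hx', sum_sub_distrib, sub_nonneg]
  exact hdom x'

theorem sum_mul_le_of_stochDom (htotal : ∀ x y, pref x y ∨ pref y x) (htrans : Transitive pref)
    (hp : ∀ x, 0 ≤ p x) (hastar : ∀ x, 0 ≤ astar x) (ha : ∀ x, 0 ≤ a x)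
    (hmono : SupportPriceMonotone pref p astar) (hdom : StochDom pref a astar) :
    ∑ x, p x * astar x ≤ ∑ x, p x * a x := by
  have := (sum_mul_nonneg_of_superlevel_sum_nonneg (fun _ => minPriceAbove_nonneg hp)
    fun x _ => superlevel_sum_nonneg_of_stochDom htotal htrans hdom x).1
  linarith [sum_minPriceAbove_mul_sub_le hastar ha hmono]

theorem sum_mul_lt_of_strictStochDom (htotal : ∀ x y, pref x y ∨ pref y x)
    (htrans : Transitive pref) (hp : ∀ x, 0 ≤ p x) (hastar : ∀ x, 0 ≤ astar x)
    (hastar_sum : ∑ x, astar x = 1) (ha : ∀ x, 0 ≤ a x) (ha_sum : ∑ x, a x = 1)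
    (hmono : SupportPriceMonotone pref p astar) (hdom : StrictStochDom pref a astar) :
    ∑ x, p x * astar x < ∑ x, p x * a x := by
  obtain ⟨hdom, x₀, hx₀⟩ := hdom
  set m := minPriceAbove pref p
  obtain ⟨y, hy, hyx⟩ : ∃ y, 0 < astar y ∧ ¬ pref y x₀ := by
    by_contra! hsupp
    have hall : ∑ y ∈ univ.filter (fun y => pref y x₀), astar y = 1 :=
      hastar_sum ▸ sum_subset (filter_subset _ _) fun y _ hy =>
        le_antisymm (not_lt.1 fun h => hy (mem_filter.2 ⟨mem_univ y, hsupp y h⟩)) (hastar y)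
    linarith [sum_le_univ_sum_of_nonneg (s := univ.filter (fun y => pref y x₀)) ha]
  -- outside the upper contour set of `x₀`, the superlevel set of `m x₀` carries no `astar`-mass
  have hlevel : 0 < ∑ u ∈ univ.filter (fun u => m x₀ ≤ m u), (a u - astar u) := by
    calc 0 < ∑ u ∈ univ.filter (fun u => pref u x₀), (a u - astar u) := by
          rw [sum_sub_distrib]; linarith
      _ ≤ _ := by
        refine sum_le_sum_of_subset_of_nonneg
          (fun u hu => mem_filter.2 ⟨mem_univ u, minPriceAbove_mono htrans (mem_filter.1 hu).2⟩)
          fun u hu hu' => ?_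
        have : ¬ 0 < astar u := fun h => (mem_filter.1 hu).2.not_gt <|
          minPriceAbove_le_self.trans_lt <| lt_minPriceAbove htotal htrans hmono h
            fun h' => hu' (mem_filter.2 ⟨mem_univ u, h'⟩)
        linarith [ha u, hastar u]
  have := (sum_mul_nonneg_of_superlevel_sum_nonneg (fun _ => minPriceAbove_nonneg hp)
    fun x _ => superlevel_sum_nonneg_of_stochDom htotal htrans hdom x).2
    ⟨x₀, (hp y).trans_lt (lt_minPriceAbove htotal htrans hmono hy hyx), hlevel⟩
  linarith [sum_minPriceAbove_mul_sub_le hastar ha hmono]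

end Dominance

section Demand

variable {X : Type*} {pref : X → X → Prop} {b : ℝ} {q : X → ℝ} {x y : X}

def IsDemanded (pref : X → X → Prop) (b : ℝ) (q : X → ℝ) (x : X) : Prop :=
  q x ≤ b ∧ (∀ y, q y ≤ b → pref x y) ∧
    ∀ y, q y ≤ b → (∀ z, q z ≤ b → pref y z) → q x ≤ q y

theorem IsDemanded.le_of_pref (htrans : Transitive pref) (hy : IsDemanded pref b q y)
    (hxy : pref x y) : q y ≤ q x := by
  by_cases hx : q x ≤ b
  · exact hy.2.2 x hx fun z hz => htrans hxy (hy.2.1 z hz)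
  · linarith [hy.1, not_le.1 hx]

theorem IsDemanded.lt_of_not_pref (hy : IsDemanded pref b q y) (hyx : ¬ pref y x) : q y < q x :=
  hy.1.trans_lt (not_le.1 fun hx => hyx (hy.2.1 x hx))

theorem exists_isDemanded_of_mem_demand [DecidableEq X] {d : X → ℝ} (haff : ∃ x, q x ≤ b)
    (hd : d ∈ Demand pref b q) : ∃ x, IsDemanded pref b q x ∧ d = basisVec x := by
  rcases hd with ⟨x, hx, rfl, hmax, hcheap⟩ | ⟨hnone, -⟩
  · exact ⟨x, ⟨hx, hmax, hcheap⟩, rfl⟩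
  · exact absurd haff hnone

end Demand

section Lottery

variable {X : Type*} [Fintype X] [DecidableEq X] {pref : X → X → Prop} {b : ℝ}
  {G : Measure (X → ℝ)} [IsProbabilityMeasure G] {p a : X → ℝ}

theorem exists_of_mem_lottery (haff : ∀ᵐ ξ ∂G, ∃ x, (p + ξ) x ≤ b)
    (ha : a ∈ Lottery pref b G p) :
    ∃ g : (X → ℝ) → X → ℝ, (∀ᵐ ξ ∂G, ∃ x, IsDemanded pref b (p + ξ) x ∧ g ξ = basisVec x) ∧
      ∀ y, Integrable (fun ξ => g ξ y) G ∧ a y = ∫ ξ, g ξ y ∂G := by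
  obtain ⟨g, hg, hdem, rfl⟩ := ha
  have hbasis : ∀ᵐ ξ ∂G, ∃ x, IsDemanded pref b (p + ξ) x ∧ g ξ = basisVec x := by
    filter_upwards [haff, hdem] with ξ hξ hgξ using exists_isDemanded_of_mem_demand hξ hgξ
  have hint : ∀ y, Integrable (fun ξ => g ξ y) G := fun y =>
    Integrable.of_bound ((measurable_pi_apply y).comp hg).aestronglyMeasurable 1 <|
      hbasis.mono fun ξ ⟨x, _, hx⟩ => by rw [hx]; by_cases y = x <;> simp [basisVec, *]
  exact ⟨g, hbasis, fun y => ⟨hint y, eval_integral hint y⟩⟩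

theorem nonneg_of_mem_lottery (haff : ∀ᵐ ξ ∂G, ∃ x, (p + ξ) x ≤ b)
    (ha : a ∈ Lottery pref b G p) (y : X) : 0 ≤ a y := by
  obtain ⟨g, hbasis, hg⟩ := exists_of_mem_lottery haff ha
  rw [(hg y).2]
  exact integral_nonneg_of_ae <| hbasis.mono fun ξ ⟨x, _, hx⟩ => by
    simp only [hx, basisVec, Pi.zero_apply]; split_ifs <;> norm_num

theorem sum_eq_one_of_mem_lottery (haff : ∀ᵐ ξ ∂G, ∃ x, (p + ξ) x ≤ b)
    (ha : a ∈ Lottery pref b G p) : ∑ y, a y = 1 := by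
  obtain ⟨g, hbasis, hg⟩ := exists_of_mem_lottery haff ha
  have hone : (fun ξ => ∑ y, g ξ y) =ᵐ[G] fun _ => 1 :=
    hbasis.mono fun ξ ⟨x, _, hx⟩ => by simp [hx, basisVec]
  simp_rw [fun y => (hg y).2]
  rw [← integral_finset_sum _ fun y _ => (hg y).1, integral_congr_ae hone]
  simp

theorem frequently_isDemanded_of_mem_lottery (haff : ∀ᵐ ξ ∂G, ∃ x, (p + ξ) x ≤ b)
    (ha : a ∈ Lottery pref b G p) {y : X} (hy : 0 < a y) :
    ∃ᵐ ξ ∂G, IsDemanded pref b (p + ξ) y := by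
  obtain ⟨g, hbasis, hg⟩ := exists_of_mem_lottery haff ha
  by_contra hnot
  refine hy.ne' ?_
  rw [(hg y).2, integral_eq_zero_of_ae]
  filter_upwards [hbasis, Filter.not_frequently.1 hnot] with ξ ⟨x, hx, hgx⟩ hyξ
  have hyx : y ≠ x := by rintro rfl; exact hyξ hx
  simp [hgx, basisVec, hyx]

end Lottery

section Shocks

variable {X : Type*} {pref : X → X → Prop} {b : ℝ} {G : Measure (X → ℝ)} {p astar : X → ℝ}

theorem supportPriceMonotone_of_common_shock (htrans : Transitive pref)
    (hdem : ∀ y, 0 < astar y → ∃ᵐ ξ ∂G, IsDemanded pref b (p + ξ) y)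
    (hcommon : ∀ᵐ ξ ∂G, ∀ x y : X, ξ x = ξ y) : SupportPriceMonotone pref p astar := by
  intro x y hxy hy
  obtain ⟨ξ, hξ, hcξ⟩ := ((hdem y hy).and_eventually hcommon).exists
  have hle := hξ.le_of_pref htrans hxy
  have hlt := fun hyx => hξ.lt_of_not_pref (x := x) hyx
  simp only [Pi.add_apply, hcξ x y] at hle hlt
  exact ⟨by linarith, fun hyx => by linarith [hlt hyx]⟩

theorem supportPriceMonotone_of_separated {z : ℝ} (htrans : Transitive pref) (hz : 0 ≤ z)
    (hdem : ∀ y, 0 < astar y → ∃ᵐ ξ ∂G, IsDemanded pref b (p + ξ) y)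
    (hspread : ∀ᵐ ξ ∂G, ∃ c : ℝ, ∀ x : X, |ξ x - c| ≤ z)
    (hsep : ∀ x y : X, x ≠ y → 2 * z < |p x - p y|) : SupportPriceMonotone pref p astar := by
  intro x y hxy hy
  obtain ⟨ξ, hξ, c, hc⟩ := ((hdem y hy).and_eventually hspread).exists
  have hle : p y - p x ≤ 2 * z := by
    have := hξ.le_of_pref htrans hxy
    simp only [Pi.add_apply] at this
    linarith [abs_le.1 (hc x), abs_le.1 (hc y)]
  have hlt : x ≠ y → p y < p x := fun hne => by
    rcases lt_abs.1 (hsep x y hne) with h | h <;> linarith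
  refine ⟨?_, fun hyx => hlt fun hxy' => hyx (hxy' ▸ hxy)⟩
  rcases eq_or_ne x y with rfl | hne
  · exact le_rfl
  · exact (hlt hne).le

end Shocks

theorem dominating_bundle_costs_more_general
    {X : Type*} [Fintype X] [DecidableEq X]
    (pref : X → X → Prop)
    (hcomplete : ∀ x y, pref x y ∨ pref y x)
    (htrans : Transitive pref)
    (bi : ℝ)
    (G : Measure (X → ℝ)) [IsProbabilityMeasure G]
    (pstar : X → ℝ) (hp : ∀ x, 0 ≤ pstar x)
    (w : X) (hw : pstar w = 0)
    (ξhi : ℝ) (hbound : ∀ᵐ ξ ∂G, ∀ x : X, ξ x ≤ ξhi) (hξb : ξhi < bi)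
    (z : ℝ) (hz : 0 ≤ z)
    -- case (i): common shock; or case (ii): bounded idiosyncratic part with
    -- positive prices separated by more than 2z
    (hcase :
      (∀ᵐ ξ ∂G, ∀ x y : X, ξ x = ξ y) ∨
      ((∀ᵐ ξ ∂G, ∃ c : ℝ, ∀ x : X, |ξ x - c| ≤ z) ∧
        (∀ x y : X, x ≠ y → 2 * z < |pstar x - pstar y|)))
    (astar : X → ℝ) (hastar : astar ∈ Lottery pref bi G pstar)
    (a : X → ℝ) (ha01 : ∀ x, 0 ≤ a x ∧ a x ≤ 1) (hsum : ∑ x, a x = 1) :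
    (StochDom pref a astar → ∑ x, pstar x * astar x ≤ ∑ x, pstar x * a x) ∧
    (StrictStochDom pref a astar → ∑ x, pstar x * astar x < ∑ x, pstar x * a x) := by
  have haff : ∀ᵐ ξ ∂G, ∃ x, (pstar + ξ) x ≤ bi :=
    hbound.mono fun ξ hξ => ⟨w, by simp only [Pi.add_apply, hw]; linarith [hξ w]⟩
  have hdem := fun y => frequently_isDemanded_of_mem_lottery (y := y) haff hastar
  have hmono : SupportPriceMonotone pref pstar astar := by
    rcases hcase with hcommon | ⟨hspread, hsep⟩
    · exact supportPriceMonotone_of_common_shock htrans hdem hcommon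
    · exact supportPriceMonotone_of_separated htrans hz hdem hspread hsep
  have hastar0 := nonneg_of_mem_lottery haff hastar
  have ha0 := fun x => (ha01 x).1
  exact ⟨sum_mul_le_of_stochDom hcomplete htrans hp hastar0 ha0 hmono,
    sum_mul_lt_of_strictStochDom hcomplete htrans hp hastar0
      (sum_eq_one_of_mem_lottery haff hastar) ha0 hsum hmono⟩

/-- Lemma 2 (Strassen bound): a stochastically dominating bundle is at least as
expensive at equilibrium prices, strictly so under strict dominance, provided
either the common-shock (no tie-breaking) or the separated-prices random
tie-breaking condition holds. -/
theorem dominating_bundle_costs_more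
    {X : Type*} [Fintype X] [DecidableEq X]
    (pref : X → X → Prop)
    (hcomplete : ∀ x y, pref x y ∨ pref y x)
    (htrans : Transitive pref)
    (bi : ℝ) (hbi : 0 < bi)
    (G : Measure (X → ℝ)) [IsProbabilityMeasure G]
    (pstar : X → ℝ) (hp : ∀ x, 0 ≤ pstar x)
    (w : X) (hw : pstar w = 0)
    (ξhi : ℝ) (hbound : ∀ᵐ ξ ∂G, ∀ x : X, ξ x ≤ ξhi) (hξb : ξhi < bi)
    (z : ℝ) (hz : 0 ≤ z)
    -- case (i): common shock; or case (ii): bounded idiosyncratic part with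
    -- positive prices separated by more than 2z
    (hcase :
      (∀ᵐ ξ ∂G, ∀ x y : X, ξ x = ξ y) ∨
      ((∀ᵐ ξ ∂G, ∃ c : ℝ, ∀ x : X, |ξ x - c| ≤ z) ∧
        (∀ x y : X, x ≠ y → 2 * z < |pstar x - pstar y|)))
    (astar : X → ℝ) (hastar : astar ∈ Lottery pref bi G pstar)
    (a : X → ℝ) (ha01 : ∀ x, 0 ≤ a x ∧ a x ≤ 1) (hsum : ∑ x, a x = 1) :
    (StochDom pref a astar → ∑ x, pstar x * astar x ≤ ∑ x, pstar x * a x) ∧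
    (StrictStochDom pref a astar → ∑ x, pstar x * astar x < ∑ x, pstar x * a x) :=
  dominating_bundle_costs_more_general pref hcomplete htrans bi G pstar hp w hw ξhi hbound hξb z hz
    hcase astar hastar a ha01 hsum
end

section
/- Let i be an agent type and let p ∈ ℝ^X satisfy p_x ≠ b_i for every x ∈ X. Then the demand correspondence D_i has a closed graph at p: for every sequence (q^k) in ℝ^X with q^k → p and every sequence (d^k) with d^k ∈ D_i(q^k) for all k and d^k → d in ℝ^X, one has d ∈ D_i(p). -/
open MeasureTheory Pointwise

open Filter Topology

/-!
Demands take values in the finite set `{0} ∪ {e_x}`, so a convergent sequence of demands is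
eventually equal to its limit. Since no price at `p` sits on the budget line, the affordable set
at `q^k` eventually coincides with the one at `p`; hence affordability and maximality transfer
verbatim to `p`, while the cost-minimality inequalities `q^k_x ≤ q^k_y` pass to the limit.
-/

theorem Filter.Tendsto.eventually_eq_of_eventually_mem_finite {ι α : Type*} [TopologicalSpace α]
    [T1Space α] {l : Filter ι} {u : ι → α} {a : α} {s : Set α} (hs : s.Finite)
    (hus : ∀ᶠ k in l, u k ∈ s) (hu : Tendsto u l (𝓝 a)) : ∀ᶠ k in l, u k = a := by
  have hnhds : (s \ {a})ᶜ ∈ 𝓝 a :=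
    ((hs.sdiff (t := {a})).isClosed.isOpen_compl).mem_nhds fun h => h.2 rfl
  filter_upwards [hus, hu hnhds] with k hks hka
  by_contra hne
  exact hka ⟨hks, hne⟩

theorem eventually_forall_le_iff_of_tendsto {ι X : Type*} [Finite X] {l : Filter ι}
    {q : ι → X → ℝ} {p : X → ℝ} {b : ℝ} (hq : Tendsto q l (𝓝 p)) (hbdry : ∀ x, p x ≠ b) :
    ∀ᶠ k in l, ∀ x, q k x ≤ b ↔ p x ≤ b := by
  refine eventually_all.2 fun x => ?_
  have hqx := tendsto_pi_nhds.1 hq x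
  rcases (hbdry x).lt_or_gt with hlt | hgt
  · filter_upwards [hqx.eventually_lt_const hlt] with k hk
    exact iff_of_true hk.le hlt.le
  · filter_upwards [hqx.eventually_const_lt hgt] with k hk
    exact iff_of_false hk.not_ge hgt.not_ge

section Demand

variable {X : Type*} [DecidableEq X]

theorem basisVec_injective : Function.Injective (basisVec : X → X → ℝ) := by
  intro x y hxy
  by_contra hne
  simpa [basisVec, hne] using congrFun hxy x

theorem basisVec_ne_zero (x : X) : basisVec x ≠ 0 := fun h => by
  simpa [basisVec] using congrFun h x

variable {pref : X → X → Prop} {b : ℝ} {q : X → ℝ}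

theorem basisVec_mem_demand_iff {x : X} :
    basisVec x ∈ Demand pref b q ↔ q x ≤ b ∧ (∀ y, q y ≤ b → pref x y) ∧
      ∀ y, q y ≤ b → (∀ z, q z ≤ b → pref y z) → q x ≤ q y := by
  simp only [Demand, Set.mem_ofPred_eq, basisVec_injective.eq_iff, basisVec_ne_zero, and_false,
    or_false]
  constructor
  · rintro ⟨y, hy, rfl, h⟩
    exact ⟨hy, h⟩
  · rintro ⟨hx, h⟩
    exact ⟨x, hx, rfl, h⟩

theorem zero_mem_demand_iff : (0 : X → ℝ) ∈ Demand pref b q ↔ ¬∃ x, q x ≤ b := by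
  simp [Demand, (basisVec_ne_zero _).symm]

theorem eq_zero_or_exists_eq_basisVec_of_mem_demand {e : X → ℝ} (he : e ∈ Demand pref b q) :
    e = 0 ∨ ∃ x, e = basisVec x := by
  rcases he with ⟨x, -, rfl, -⟩ | ⟨-, rfl⟩
  · exact Or.inr ⟨x, rfl⟩
  · exact Or.inl rfl

theorem demand_subset_insert_zero_range :
    Demand pref b q ⊆ insert 0 (Set.range basisVec) := fun _ he =>
  (eq_zero_or_exists_eq_basisVec_of_mem_demand he).imp id fun ⟨x, hx⟩ => ⟨x, hx.symm⟩

theorem mem_demand_of_eventually_mem_demand {ι : Type*} [Finite X] {l : Filter ι} [l.NeBot]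
    {q : ι → X → ℝ} {p : X → ℝ} (hq : Tendsto q l (𝓝 p)) (hbdry : ∀ x, p x ≠ b) {e : X → ℝ}
    (he : ∀ᶠ k in l, e ∈ Demand pref b (q k)) : e ∈ Demand pref b p := by
  have hboth := he.and (eventually_forall_le_iff_of_tendsto hq hbdry)
  obtain ⟨k, hek, -⟩ := hboth.exists
  rcases eq_zero_or_exists_eq_basisVec_of_mem_demand hek with rfl | ⟨x, rfl⟩
  · obtain ⟨k, hk, hiff⟩ := hboth.exists
    simpa only [zero_mem_demand_iff, hiff] using hk
  · simp only [basisVec_mem_demand_iff] at hboth ⊢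
    obtain ⟨k, ⟨hxk, hmaxk, -⟩, hiff⟩ := hboth.exists
    simp only [hiff] at hxk hmaxk
    refine ⟨hxk, hmaxk, fun y hy hymax => ?_⟩
    refine le_of_tendsto_of_tendsto (tendsto_pi_nhds.1 hq x) (tendsto_pi_nhds.1 hq y) ?_
    filter_upwards [hboth] with k hk
    obtain ⟨⟨-, -, hmin⟩, hiff⟩ := hk
    exact hmin y ((hiff y).2 hy) fun z hz => hymax z ((hiff z).1 hz)

end Demand

theorem demand_closed_graph_general
    {X : Type*} [Fintype X] [DecidableEq X]
    (pref : X → X → Prop)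
    (bi : ℝ)
    (p : X → ℝ) (hbdry : ∀ x, p x ≠ bi)
    (q : ℕ → X → ℝ) (hq : Tendsto q atTop (𝓝 p))
    (d : ℕ → X → ℝ) (hd : ∀ k, d k ∈ Demand pref bi (q k))
    (dlim : X → ℝ) (hdlim : Tendsto d atTop (𝓝 dlim)) :
    dlim ∈ Demand pref bi p := by
  have hd_eq : ∀ᶠ k in atTop, d k = dlim :=
    hdlim.eventually_eq_of_eventually_mem_finite ((Set.finite_range basisVec).insert 0)
      (Eventually.of_forall fun k => demand_subset_insert_zero_range (hd k))
  refine mem_demand_of_eventually_mem_demand hq hbdry ?_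
  filter_upwards [hd_eq] with k hk
  exact hk ▸ hd k

/-- Claim 1 of Theorem 1: away from the budget boundary, the demand
correspondence has a closed graph. -/
theorem demand_closed_graph
    {X : Type*} [Fintype X] [DecidableEq X]
    (pref : X → X → Prop)
    (hcomplete : ∀ x y, pref x y ∨ pref y x)
    (htrans : Transitive pref)
    (bi : ℝ) (hbi : 0 < bi)
    (p : X → ℝ) (hbdry : ∀ x, p x ≠ bi)
    (q : ℕ → X → ℝ) (hq : Tendsto q atTop (𝓝 p))
    (d : ℕ → X → ℝ) (hd : ∀ k, d k ∈ Demand pref bi (q k))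
    (dlim : X → ℝ) (hdlim : Tendsto d atTop (𝓝 dlim)) :
    dlim ∈ Demand pref bi p :=
  demand_closed_graph_general pref bi p hbdry q hq d hd dlim hdlim
end
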